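/- (Scale-step lemma for Lipschitz curves) For every n ≥ 2 there is a constant C_n depending only on n such that the following holds. Let 0 < δ ≤ 1/2 and W > 0. For j = 1, ..., n and a = 1, ..., N_j, let g_{j,a} : ℝ → ℝ^{n-1} be a Lipschitz function with Lipschitz constant at most δ, and let γ_{j,a} ⊂ ℝ^n be its graph over the x_j-axis, i.e. γ_{j,a} = { x ∈ ℝ^n : (x_1, ..., x_{j-1}, x_{j+1}, ..., x_n) = g_{j,a}(x_j) }. Let T_{j,a,W} be the characteristic function of the W-neighborhood of γ_{j,a} and set f_{j,W} = Σ_{a=1}^{N_j} T_{j,a,W}. If S ≥ δ^{-1} W and Q_S is any axis-parallel cube of side length S, then ∫_{Q_S} ∏_{j=1}^n f_{j,W}^{1/(n-1)} ≤ C_n δ^n ∫_{Q_S} ∏_{j=1}^n f_{j,δ^{-1}W}^{1/(n-1)}. -/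

import Mathlib

open MeasureTheory Finset
open scoped ENNReal

noncomputable section

/-- The line in `ℝⁿ` through `p` with direction `v`. -/
def line {n : ℕ} (p v : EuclideanSpace ℝ (Fin n)) : Set (EuclideanSpace ℝ (Fin n)) :=
  {x | ∃ t : ℝ, x = p + t • v}

/-- `ℝ≥0∞`-valued characteristic function of the `W`-neighborhood of the set `A`:
the indicator of `{x : dist(x, A) ≤ W}`. -/
def tubeFn {n : ℕ} (A : Set (EuclideanSpace ℝ (Fin n))) (W : ℝ)
    (x : EuclideanSpace ℝ (Fin n)) : ℝ≥0∞ :=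
  Set.indicator {y | Metric.infDist y A ≤ W} 1 x

/-- Axis-parallel cube with corner `c` and side length `S`. -/
def cube {n : ℕ} (c : EuclideanSpace ℝ (Fin n)) (S : ℝ) : Set (EuclideanSpace ℝ (Fin n)) :=
  {x | ∀ i, x i ∈ Set.Icc (c i) (c i + S)}

/-- The projection `ℝⁿ → ℝ^{n-1}` forgetting the `j`-th coordinate. -/
def proj {n : ℕ} (j : Fin n) (x : EuclideanSpace ℝ (Fin n)) :
    EuclideanSpace ℝ (Fin (n - 1)) :=
  WithLp.toLp 2 (fun i => if (i : ℕ) < (j : ℕ) then x ⟨i, by omega⟩ else x ⟨i + 1, by omega⟩)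

/-- The graph of `g : ℝ → ℝ^{n-1}` over the `x_j`-axis. -/
def lipGraph {n : ℕ} (j : Fin n) (g : ℝ → EuclideanSpace ℝ (Fin (n - 1))) :
    Set (EuclideanSpace ℝ (Fin n)) :=
  {x | proj j x = g (x j)}

/-!
Cut the cube into boxes of side `ℓ ≍ δ⁻¹W / √n` and call a tube active on a box if its
`W`-neighbourhood meets the box. The `δ⁻¹W`-neighbourhood of an active tube covers the whole
box, so on the box the right-hand integral is at least `ℓⁿ ∏_j (#active_j)^{1/(n-1)}`.
Across the box the graph of `g_{j,a}` moves by at most `δℓ ≲ W` in the coordinates other than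
`x_j`, so inside the box the `W`-neighbourhood of an active tube lies in a product of intervals
of length `4W` in those coordinates. Thus `f_{j,W}` is dominated on the box by a sum of
`#active_j` indicator products not depending on `x_j`, and the Loomis–Whitney inequality bounds
the left-hand integral by `(4W)ⁿ ∏_j (#active_j)^{1/(n-1)} ≲ (δℓ)ⁿ ∏_j (#active_j)^{1/(n-1)}`.
-/

section LoomisWhitney

variable {ι : Type*} [DecidableEq ι] {X : ι → Type*} [∀ i, MeasurableSpace (X i)]
  (μ : ∀ i, Measure (X i)) [∀ i, SigmaFinite (μ i)]

theorem lmarginal_prod_rpow_le [Fintype ι] {p : ℝ} (hp₀ : 0 ≤ p)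
    (hp : ((Fintype.card ι : ℝ) - 1) * p = 1) (G : ι → (∀ i, X i) → ℝ≥0∞)
    (hG : ∀ j, Measurable (G j)) (hG_indep : ∀ j x t, G j (Function.update x j t) = G j x)
    (s : Finset ι) (x : ∀ i, X i) :
    (∫⋯∫⁻_s, (fun y => ∏ j, G j y ^ p) ∂μ) x ≤ ∏ j, (∫⋯∫⁻_(s.erase j), G j ∂μ) x ^ p := by
  induction s using Finset.induction generalizing x with
  | empty => simp
  | insert i s hi ih =>
    have hmarg : ∀ j, Measurable fun t => (∫⋯∫⁻_(s.erase j), G j ∂μ) (Function.update x i t) :=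
      fun j => ((hG j).lmarginal μ).comp (measurable_update x)
    have hGi : ∀ t, (∫⋯∫⁻_s, G i ∂μ) (Function.update x i t) = (∫⋯∫⁻_s, G i ∂μ) x := fun t => by
      rw [lmarginal_update_of_notMem (hG i) hi]
      exact congrArg (fun F => (∫⋯∫⁻_s, F ∂μ) x) (funext fun y => hG_indep i y t)
    have hcard : ∑ _j ∈ univ.erase i, p = 1 := by
      rw [sum_const, card_erase_of_mem (mem_univ i), card_univ, nsmul_eq_mul, ← hp,
        Nat.cast_sub (Fintype.card_pos_iff.mpr ⟨i⟩)]
      simp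
    rw [lmarginal_insert _ (Finset.measurable_prod _ fun j _ => (hG j).pow_const p) hi,
      ← mul_prod_erase univ _ (mem_univ i), erase_insert hi]
    calc ∫⁻ t, (∫⋯∫⁻_s, (fun y => ∏ j, G j y ^ p) ∂μ) (Function.update x i t) ∂μ i
        ≤ ∫⁻ t, (∫⋯∫⁻_s, G i ∂μ) x ^ p *
            ∏ j ∈ univ.erase i, (∫⋯∫⁻_(s.erase j), G j ∂μ) (Function.update x i t) ^ p ∂μ i := by
          refine lintegral_mono fun t => (ih _).trans_eq ?_
          rw [← mul_prod_erase univ _ (mem_univ i), erase_eq_of_notMem hi, hGi]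
      _ ≤ (∫⋯∫⁻_s, G i ∂μ) x ^ p * ∏ j ∈ univ.erase i,
            (∫⁻ t, (∫⋯∫⁻_(s.erase j), G j ∂μ) (Function.update x i t) ∂μ i) ^ p := by
          rw [lintegral_const_mul _ (Finset.measurable_prod _ fun j _ => (hmarg j).pow_const p)]
          gcongr
          exact ENNReal.lintegral_prod_norm_pow_le _ (fun j _ => (hmarg j).aemeasurable) hcard
            fun j _ => hp₀
      _ = _ := by
          congr 1
          refine prod_congr rfl fun j hj => ?_
          have hij : i ∉ s.erase j := fun h => hi (mem_of_mem_erase h)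
          rw [erase_insert_of_ne (ne_of_mem_erase hj).symm, lmarginal_insert _ (hG j) hij]

theorem lmarginal_prod_apply (φ : ∀ i, X i → ℝ≥0∞) (hφ : ∀ i, Measurable (φ i))
    (s : Finset ι) (x : ∀ i, X i) :
    (∫⋯∫⁻_s, (fun y => ∏ i ∈ s, φ i (y i)) ∂μ) x = ∏ i ∈ s, ∫⁻ t, φ i t ∂μ i := by
  induction s using Finset.induction generalizing x with
  | empty => simp
  | insert i s hi ih =>
    have hm : ∀ s : Finset ι, Measurable fun y : ∀ i, X i => ∏ k ∈ s, φ k (y k) :=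
      fun s => Finset.measurable_prod _ fun k _ => (hφ k).comp (measurable_pi_apply k)
    have hfactor : ∀ z, (∫⋯∫⁻_s, (fun y => ∏ k ∈ insert i s, φ k (y k)) ∂μ) z
        = φ i (z i) * (∫⋯∫⁻_s, (fun y => ∏ k ∈ s, φ k (y k)) ∂μ) z := fun z => by
      have hzi : ∀ y, Function.updateFinset z s y i = z i := fun y => by
        simp [Function.updateFinset, hi]
      simp only [lmarginal, prod_insert hi, hzi]
      exact lintegral_const_mul _ ((hm s).comp measurable_updateFinset)
    rw [lmarginal_insert _ (hm _) hi]
    simp_rw [hfactor, Function.update_self, ih]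
    rw [lintegral_mul_const _ (hφ i), prod_insert hi]

theorem lmarginal_prod_indicator_le (t : ∀ i, Set (X i)) (ht : ∀ i, MeasurableSet (t i))
    {V : ℝ≥0∞} (s : Finset ι) (hV : ∀ i ∈ s, μ i (t i) ≤ V) (x : ∀ i, X i) :
    (∫⋯∫⁻_s, (fun y => ∏ i ∈ s, (t i).indicator (1 : X i → ℝ≥0∞) (y i)) ∂μ) x ≤ V ^ #s := by
  rw [lmarginal_prod_apply μ _ (fun i => measurable_one.indicator (ht i)), ← prod_const]
  exact prod_le_prod' fun i hi => (lintegral_indicator_one (ht i)).trans_le (hV i hi)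

theorem lintegral_prod_sum_prod_indicator_le [Fintype ι] {α : ι → Type*}
    (A : ∀ j, Finset (α j)) (t : ∀ j, α j → ∀ i, Set (X i))
    (ht : ∀ j a i, MeasurableSet (t j a i)) {V : ℝ≥0∞}
    (hV : ∀ j, ∀ a ∈ A j, ∀ i ≠ j, μ i (t j a i) ≤ V) {p : ℝ} (hp₀ : 0 ≤ p)
    (hp : ((Fintype.card ι : ℝ) - 1) * p = 1) :
    ∫⁻ y, ∏ j, (∑ a ∈ A j, ∏ i ∈ univ.erase j, (t j a i).indicator (1 : X i → ℝ≥0∞) (y i)) ^ p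
        ∂Measure.pi μ
      ≤ V ^ Fintype.card ι * ∏ j, (#(A j) : ℝ≥0∞) ^ p := by
  rcases isEmpty_or_nonempty (∀ i, X i) with _ | ⟨⟨x⟩⟩
  · simp [lintegral_of_isEmpty]
  have hι : 1 ≤ Fintype.card ι := by
    by_contra! h
    rw [Nat.lt_one_iff.mp h, Nat.cast_zero] at hp
    linarith
  set slabs : ∀ j, α j → (∀ i, X i) → ℝ≥0∞ :=
    fun j a y => ∏ i ∈ univ.erase j, (t j a i).indicator (1 : X i → ℝ≥0∞) (y i)
  have hslabs : ∀ j a, Measurable (slabs j a) := fun j a =>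
    Finset.measurable_prod _ fun i _ =>
      (measurable_one.indicator (ht j a i)).comp (measurable_pi_apply i)
  have hslabs_marg : ∀ j, ∀ a ∈ A j,
      (∫⋯∫⁻_(univ.erase j), slabs j a ∂μ) x ≤ V ^ (Fintype.card ι - 1) := by
    intro j a ha
    rw [← card_univ, ← card_erase_of_mem (mem_univ j)]
    exact lmarginal_prod_indicator_le μ _ (ht j a) _
      (fun i hi => hV j a ha i (ne_of_mem_erase hi)) x
  set G : ι → (∀ i, X i) → ℝ≥0∞ := fun j y => ∑ a ∈ A j, slabs j a y
  have hmarg : ∀ j, (∫⋯∫⁻_(univ.erase j), G j ∂μ) x ≤ #(A j) * V ^ (Fintype.card ι - 1) := by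
    intro j
    calc (∫⋯∫⁻_(univ.erase j), G j ∂μ) x
        = ∑ a ∈ A j, (∫⋯∫⁻_(univ.erase j), slabs j a ∂μ) x :=
          lintegral_finsetSum _ fun a _ => (hslabs j a).comp measurable_updateFinset
      _ ≤ ∑ _a ∈ A j, V ^ (Fintype.card ι - 1) := sum_le_sum (hslabs_marg j)
      _ = _ := by rw [sum_const, nsmul_eq_mul]
  have hVp : (V ^ (Fintype.card ι - 1)) ^ p = V := by
    rw [← ENNReal.rpow_natCast, ← ENNReal.rpow_mul, Nat.cast_sub hι, Nat.cast_one, hp,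
      ENNReal.rpow_one]
  calc ∫⁻ y, ∏ j, G j y ^ p ∂Measure.pi μ
      = (∫⋯∫⁻_univ, (fun y => ∏ j, G j y ^ p) ∂μ) x := lintegral_eq_lmarginal_univ x
    _ ≤ ∏ j, (∫⋯∫⁻_(univ.erase j), G j ∂μ) x ^ p := by
        refine lmarginal_prod_rpow_le μ hp₀ hp G
          (fun j => Finset.measurable_sum _ fun a _ => hslabs j a) (fun j y s => ?_) univ x
        refine sum_congr rfl fun a _ => prod_congr rfl fun i hi => ?_
        rw [Function.update_of_ne (ne_of_mem_erase hi)]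
    _ ≤ ∏ j, ((#(A j) : ℝ≥0∞) * V ^ (Fintype.card ι - 1)) ^ p :=
        prod_le_prod' fun j _ => ENNReal.rpow_le_rpow (hmarg j) hp₀
    _ = V ^ Fintype.card ι * ∏ j, (#(A j) : ℝ≥0∞) ^ p := by
        simp_rw [ENNReal.mul_rpow_of_nonneg _ _ hp₀, hVp, prod_mul_distrib, prod_const,
          card_univ, mul_comm]

end LoomisWhitney

section Subdivision

variable {ι : Type*}

def icoBox (u : ι → ℝ) (ℓ : ℝ) : Set (ι → ℝ) :=
  Set.pi Set.univ fun i => Set.Ico (u i) (u i + ℓ)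

theorem measurableSet_icoBox [Countable ι] (u : ι → ℝ) (ℓ : ℝ) : MeasurableSet (icoBox u ℓ) :=
  MeasurableSet.univ_pi fun _ => measurableSet_Ico

theorem abs_sub_le_of_mem_icoBox {u y z : ι → ℝ} {ℓ : ℝ} (hy : y ∈ icoBox u ℓ)
    (hz : z ∈ icoBox u ℓ) (i : ι) : |y i - z i| ≤ ℓ := by
  obtain ⟨hy₁, hy₂⟩ := hy i trivial
  obtain ⟨hz₁, hz₂⟩ := hz i trivial
  exact abs_sub_le_iff.mpr ⟨by linarith, by linarith⟩

theorem mem_Ico_add_mul_iff {a ℓ t : ℝ} (hℓ : 0 < ℓ) (k : ℕ) :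
    t ∈ Set.Ico (a + k * ℓ) (a + k * ℓ + ℓ) ↔ a ≤ t ∧ ⌊(t - a) / ℓ⌋₊ = k := by
  rw [Set.mem_Ico]
  constructor
  · rintro ⟨h₁, h₂⟩
    have hk : (0 : ℝ) ≤ k * ℓ := by positivity
    refine ⟨by linarith, (Nat.floor_eq_iff (div_nonneg (by linarith) hℓ.le)).mpr ⟨?_, ?_⟩⟩
    · rw [le_div_iff₀ hℓ]; linarith
    · rw [div_lt_iff₀ hℓ]; linarith
  · rintro ⟨h₀, hk⟩
    obtain ⟨h₁, h₂⟩ := (Nat.floor_eq_iff (div_nonneg (by linarith) hℓ.le)).mp hk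
    rw [le_div_iff₀ hℓ] at h₁
    rw [div_lt_iff₀ hℓ] at h₂
    constructor <;> linarith

theorem icoBox_mul_eq_iUnion (a : ι → ℝ) {ℓ : ℝ} (hℓ : 0 < ℓ) (K : ℕ) :
    icoBox a (K * ℓ) = ⋃ b : ι → Fin K, icoBox (fun i => a i + (b i : ℕ) * ℓ) ℓ := by
  ext y
  simp only [icoBox, Set.mem_univ_pi, Set.mem_iUnion, mem_Ico_add_mul_iff hℓ]
  constructor
  · intro hy
    refine ⟨fun i => ⟨⌊(y i - a i) / ℓ⌋₊, ?_⟩, fun i => ⟨(hy i).1, rfl⟩⟩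
    rw [Nat.floor_lt (div_nonneg (by linarith [(hy i).1]) hℓ.le), div_lt_iff₀ hℓ]
    linarith [(hy i).2]
  · rintro ⟨b, hb⟩ i
    have hlt := (b i).isLt
    rw [← (hb i).2, Nat.floor_lt (div_nonneg (by linarith [(hb i).1]) hℓ.le),
      div_lt_iff₀ hℓ] at hlt
    exact ⟨(hb i).1, by linarith⟩

theorem pairwise_disjoint_icoBox_add_mul (a : ι → ℝ) {ℓ : ℝ} (hℓ : 0 < ℓ) (K : ℕ) :
    Pairwise (Function.onFun Disjoint fun b : ι → Fin K =>
      icoBox (fun i => a i + (b i : ℕ) * ℓ) ℓ) := by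
  intro b b' hne
  refine Set.disjoint_left.mpr fun y hy hy' => hne (funext fun i => Fin.ext ?_)
  rw [← ((mem_Ico_add_mul_iff hℓ _).mp (hy i trivial)).2,
    ((mem_Ico_add_mul_iff hℓ _).mp (hy' i trivial)).2]

theorem setLIntegral_pi_Icc_eq_sum_icoBox [Fintype ι] [DecidableEq ι] (f : (ι → ℝ) → ℝ≥0∞)
    (a : ι → ℝ) {ℓ : ℝ} (hℓ : 0 < ℓ) (K : ℕ) :
    ∫⁻ y in Set.pi Set.univ (fun i => Set.Icc (a i) (a i + K * ℓ)), f y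
      = ∑ b : ι → Fin K, ∫⁻ y in icoBox (fun i => a i + (b i : ℕ) * ℓ) ℓ, f y := by
  rw [Set.pi_univ_Icc, volume_pi, ← setLIntegral_congr Measure.univ_pi_Ico_ae_eq_Icc, ← volume_pi,
    ← icoBox, icoBox_mul_eq_iUnion a hℓ K,
    lintegral_iUnion (fun b => measurableSet_icoBox _ ℓ)
      (pairwise_disjoint_icoBox_add_mul a hℓ K), tsum_fintype]

end Subdivision

theorem exists_div_mem_Icc {L S : ℝ} (hL : 0 < L) (hLS : L ≤ S) :
    ∃ K : ℕ, 0 < K ∧ L / 2 ≤ S / K ∧ S / K ≤ L := by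
  have hSL : 1 ≤ S / L := (one_le_div hL).mpr hLS
  have hK : 0 < ⌈S / L⌉₊ := Nat.ceil_pos.mpr (by linarith)
  have hK' : (0 : ℝ) < ⌈S / L⌉₊ := by exact_mod_cast hK
  refine ⟨⌈S / L⌉₊, hK, ?_, ?_⟩
  · rw [le_div_iff₀ hK']
    have h₁ := Nat.ceil_lt_add_one (by linarith : 0 ≤ S / L)
    have h₂ : S / L * L = S := div_mul_cancel₀ S hL.ne'
    nlinarith
  · rw [div_le_iff₀ hK', ← div_le_iff₀' hL]
    exact Nat.le_ceil _

theorem dist_le_sqrt_card_mul {ι : Type*} [Fintype ι] {x y : EuclideanSpace ℝ ι} {r : ℝ}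
    (hr : 0 ≤ r) (h : ∀ i, |x i - y i| ≤ r) : dist x y ≤ √(Fintype.card ι) * r := by
  rw [EuclideanSpace.dist_eq, ← Real.sqrt_sq hr, ← Real.sqrt_mul (Nat.cast_nonneg _)]
  refine Real.sqrt_le_sqrt ?_
  calc ∑ i, dist (x i) (y i) ^ 2 ≤ ∑ _i : ι, r ^ 2 :=
        sum_le_sum fun i _ => pow_le_pow_left₀ dist_nonneg ((Real.dist_eq _ _).trans_le (h i)) 2
    _ = _ := by rw [sum_const, card_univ, nsmul_eq_mul]

theorem setLIntegral_setOf_forall_mem_eq {ι : Type*} [Fintype ι] (s : ι → Set ℝ)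
    (F : EuclideanSpace ℝ ι → ℝ≥0∞) :
    ∫⁻ x in {x : EuclideanSpace ℝ ι | ∀ i, x i ∈ s i}, F x
      = ∫⁻ y in Set.pi Set.univ s, F (WithLp.toLp 2 y) := by
  rw [← (PiLp.volume_preserving_toLp ι).setLIntegral_comp_preimage_emb
    (MeasurableEquiv.toLp 2 (ι → ℝ)).measurableEmbedding]
  congr 2
  ext y
  simp

theorem continuous_of_norm_sub_le {E : Type*} [SeminormedAddCommGroup E] {g : ℝ → E} {δ : ℝ}
    (hg : ∀ s t, ‖g s - g t‖ ≤ δ * |s - t|) : Continuous g :=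
  (LipschitzWith.of_dist_le' fun s t => by
    simpa only [dist_eq_norm, Real.norm_eq_abs] using hg s t).continuous

section LipschitzGraph

variable {m : ℕ} {j : Fin (m + 1)} {g : ℝ → EuclideanSpace ℝ (Fin m)}

theorem proj_apply_succAbove (j : Fin (m + 1)) (x : EuclideanSpace ℝ (Fin (m + 1))) (k : Fin m) :
    proj j x k = x (j.succAbove k) := by
  simp only [proj, PiLp.toLp_apply, Fin.succAbove, Fin.lt_def, Fin.val_castSucc]
  split_ifs <;> rfl

theorem continuous_proj (j : Fin (m + 1)) :
    Continuous (proj j : EuclideanSpace ℝ (Fin (m + 1)) → EuclideanSpace ℝ (Fin m)) := by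
  have : (proj j : EuclideanSpace ℝ (Fin (m + 1)) → EuclideanSpace ℝ (Fin m))
      = fun x => WithLp.toLp 2 fun k => x (j.succAbove k) :=
    funext fun x => by ext k; exact proj_apply_succAbove j x k
  rw [this]
  fun_prop

theorem apply_succAbove_of_mem_lipGraph {x : EuclideanSpace ℝ (Fin (m + 1))}
    (hx : x ∈ lipGraph j g) (k : Fin m) : x (j.succAbove k) = g (x j) k := by
  rw [← proj_apply_succAbove]
  exact congrArg (· k) hx

theorem isClosed_lipGraph (hg : Continuous g) : IsClosed (lipGraph j g) :=
  isClosed_eq (continuous_proj j) (hg.comp (PiLp.continuous_apply 2 _ j))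

def graphPoint (j : Fin (m + 1)) (g : ℝ → EuclideanSpace ℝ (Fin m)) (t : ℝ) :
    EuclideanSpace ℝ (Fin (m + 1)) :=
  WithLp.toLp 2 (Fin.insertNth j t fun k => g t k)

theorem graphPoint_apply_self (t : ℝ) : graphPoint j g t j = t :=
  Fin.insertNth_apply_same (α := fun _ => ℝ) _ _ _

theorem graphPoint_mem_lipGraph (t : ℝ) : graphPoint j g t ∈ lipGraph j g := by
  change proj j (graphPoint j g t) = g (graphPoint j g t j)
  ext k
  rw [proj_apply_succAbove, graphPoint_apply_self]
  exact Fin.insertNth_apply_succAbove (α := fun _ => ℝ) _ _ _ _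

theorem abs_sub_le_of_mem_lipGraph {δ : ℝ} (hg : ∀ s t, ‖g s - g t‖ ≤ δ * |s - t|)
    {x y : EuclideanSpace ℝ (Fin (m + 1))} (hx : x ∈ lipGraph j g) (hy : y ∈ lipGraph j g)
    (k : Fin m) : |x (j.succAbove k) - y (j.succAbove k)| ≤ δ * |x j - y j| := by
  rw [apply_succAbove_of_mem_lipGraph hx, apply_succAbove_of_mem_lipGraph hy, ← PiLp.sub_apply,
    ← Real.norm_eq_abs]
  exact (PiLp.norm_apply_le _ k).trans (hg _ _)

theorem abs_sub_graphPoint_le {δ W : ℝ} (hg : ∀ s t, ‖g s - g t‖ ≤ δ * |s - t|)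
    {x : EuclideanSpace ℝ (Fin (m + 1))} (hx : Metric.infDist x (lipGraph j g) ≤ W) (t : ℝ)
    (k : Fin m) :
    |x (j.succAbove k) - graphPoint j g t (j.succAbove k)| ≤ W + δ * (W + |x j - t|) := by
  obtain ⟨z, hz, hxz⟩ := (isClosed_lipGraph (continuous_of_norm_sub_le hg)).exists_infDist_eq_dist
    ⟨_, graphPoint_mem_lipGraph (j := j) t⟩ x
  have hδ : 0 ≤ δ := nonneg_of_mul_nonneg_left ((norm_nonneg _).trans (hg 1 0)) (by norm_num)
  have hxz : ∀ i, |x i - z i| ≤ W := fun i =>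
    ((Real.dist_eq _ _).symm.trans_le (PiLp.dist_apply_le x z i)).trans (hxz ▸ hx)
  have hzt : |z j - t| ≤ W + |x j - t| := by
    calc |z j - t| ≤ |x j - z j| + |x j - t| := by
          rw [abs_sub_comm (x j)]; exact abs_sub_le _ _ _
      _ ≤ W + |x j - t| := by gcongr; exact hxz j
  calc |x (j.succAbove k) - graphPoint j g t (j.succAbove k)|
      ≤ |x (j.succAbove k) - z (j.succAbove k)|
          + |z (j.succAbove k) - graphPoint j g t (j.succAbove k)| := abs_sub_le _ _ _
    _ ≤ W + δ * (W + |x j - t|) := by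
        gcongr
        · exact hxz _
        · refine (abs_sub_le_of_mem_lipGraph hg hz (graphPoint_mem_lipGraph t) k).trans ?_
          rw [graphPoint_apply_self]
          gcongr

end LipschitzGraph

section Tubes

variable {n : ℕ} {N : Fin n → ℕ}

theorem tubeFn_apply (A : Set (EuclideanSpace ℝ (Fin n))) (W : ℝ)
    (x : EuclideanSpace ℝ (Fin n)) : tubeFn A W x = if Metric.infDist x A ≤ W then 1 else 0 := by
  simp [tubeFn, Set.indicator_apply]

theorem tubeFn_le_prod_indicator {m : ℕ} {j : Fin (m + 1)} {g : ℝ → EuclideanSpace ℝ (Fin m)}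
    {δ : ℝ} (hg : ∀ s t, ‖g s - g t‖ ≤ δ * |s - t|) {x : EuclideanSpace ℝ (Fin (m + 1))}
    {t W R : ℝ} (hR : W + δ * (W + |x j - t|) ≤ R) :
    tubeFn (lipGraph j g) W x ≤ ∏ i ∈ univ.erase j,
      (Set.Icc (graphPoint j g t i - R) (graphPoint j g t i + R)).indicator
        (1 : ℝ → ℝ≥0∞) (x i) := by
  by_cases hx : Metric.infDist x (lipGraph j g) ≤ W
  · rw [tubeFn_apply, if_pos hx]
    refine (prod_eq_one fun i hi => ?_).symm.le
    obtain ⟨k, rfl⟩ := Fin.exists_succAbove_eq (ne_of_mem_erase hi)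
    have := abs_le.mp ((abs_sub_graphPoint_le hg hx t k).trans hR)
    exact Set.indicator_of_mem (Set.mem_Icc.mpr ⟨by linarith, by linarith⟩) _
  · simp [tubeFn_apply, hx]

/-- `f_{j,W}` of the paper. -/
def tubeCount (g : (j : Fin n) → Fin (N j) → ℝ → EuclideanSpace ℝ (Fin (n - 1))) (W : ℝ)
    (j : Fin n) (x : EuclideanSpace ℝ (Fin n)) : ℝ≥0∞ :=
  ∑ a, tubeFn (lipGraph j (g j a)) W x

def tubeProduct (g : (j : Fin n) → Fin (N j) → ℝ → EuclideanSpace ℝ (Fin (n - 1))) (W : ℝ)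
    (x : EuclideanSpace ℝ (Fin n)) : ℝ≥0∞ :=
  ∏ j, tubeCount g W j x ^ ((1 : ℝ) / ((n : ℝ) - 1))

open Classical in
def activeTubes (g : (j : Fin n) → Fin (N j) → ℝ → EuclideanSpace ℝ (Fin (n - 1))) (W : ℝ)
    (u : Fin n → ℝ) (ℓ : ℝ) (j : Fin n) : Finset (Fin (N j)) :=
  {a | ∃ y ∈ icoBox u ℓ, Metric.infDist (WithLp.toLp 2 y) (lipGraph j (g j a)) ≤ W}

theorem mem_activeTubes {g : (j : Fin n) → Fin (N j) → ℝ → EuclideanSpace ℝ (Fin (n - 1))}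
    {W : ℝ} {u : Fin n → ℝ} {ℓ : ℝ} {j : Fin n} {a : Fin (N j)} :
    a ∈ activeTubes g W u ℓ j ↔
      ∃ y ∈ icoBox u ℓ, Metric.infDist (WithLp.toLp 2 y) (lipGraph j (g j a)) ≤ W := by
  simp [activeTubes]

end Tubes

section Box

variable {m : ℕ} {N : Fin (m + 1) → ℕ}
  {g : (j : Fin (m + 1)) → Fin (N j) → ℝ → EuclideanSpace ℝ (Fin m)} {W ℓ : ℝ}
  {u : Fin (m + 1) → ℝ}

theorem card_activeTubes_le_tubeCount {W' : ℝ} (hℓ : 0 ≤ ℓ)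
    (hW' : W + √((m : ℝ) + 1) * ℓ ≤ W') {y : Fin (m + 1) → ℝ} (hy : y ∈ icoBox u ℓ)
    (j : Fin (m + 1)) :
    (#(activeTubes g W u ℓ j) : ℝ≥0∞) ≤ tubeCount g W' j (WithLp.toLp 2 y) := by
  calc (#(activeTubes g W u ℓ j) : ℝ≥0∞)
      = ∑ a ∈ activeTubes g W u ℓ j, tubeFn (lipGraph j (g j a)) W' (WithLp.toLp 2 y) := by
        rw [card_eq_sum_ones, Nat.cast_sum, Nat.cast_one]
        refine sum_congr rfl fun a ha => ?_
        obtain ⟨z, hz, hzW⟩ := mem_activeTubes.mp ha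
        have hyz : dist (WithLp.toLp 2 y) (WithLp.toLp 2 z) ≤ √((m : ℝ) + 1) * ℓ := by
          simpa using dist_le_sqrt_card_mul hℓ (abs_sub_le_of_mem_icoBox hy hz)
        rw [tubeFn_apply, if_pos]
        linarith [Metric.infDist_le_infDist_add_dist (x := WithLp.toLp 2 y) (y := WithLp.toLp 2 z)
          (s := lipGraph j (g j a))]
    _ ≤ tubeCount g W' j (WithLp.toLp 2 y) := sum_le_sum_of_subset (subset_univ _)

theorem le_setLIntegral_tubeProduct {W' : ℝ} (hℓ : 0 ≤ ℓ) (hW' : W + √((m : ℝ) + 1) * ℓ ≤ W') :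
    ENNReal.ofReal ℓ ^ (m + 1) *
        ∏ j, (#(activeTubes g W u ℓ j) : ℝ≥0∞) ^ ((1 : ℝ) / (((m + 1 : ℕ) : ℝ) - 1))
      ≤ ∫⁻ y in icoBox u ℓ, tubeProduct g W' (WithLp.toLp 2 y) := by
  have hp₀ : (0 : ℝ) ≤ 1 / (((m + 1 : ℕ) : ℝ) - 1) := by push_cast; simp
  calc ENNReal.ofReal ℓ ^ (m + 1) *
        ∏ j, (#(activeTubes g W u ℓ j) : ℝ≥0∞) ^ ((1 : ℝ) / (((m + 1 : ℕ) : ℝ) - 1))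
      = ∫⁻ y in icoBox u ℓ,
          ∏ j, (#(activeTubes g W u ℓ j) : ℝ≥0∞) ^ ((1 : ℝ) / (((m + 1 : ℕ) : ℝ) - 1)) := by
        rw [setLIntegral_const, icoBox, Real.volume_pi_Ico, mul_comm]
        simp
    _ ≤ _ := setLIntegral_mono' (measurableSet_icoBox u ℓ) fun y hy => prod_le_prod' fun j _ =>
        ENNReal.rpow_le_rpow (card_activeTubes_le_tubeCount hℓ hW' hy j) hp₀

theorem tubeCount_le_sum_prod_indicator {δ R : ℝ}
    (hg : ∀ j a s t, ‖g j a s - g j a t‖ ≤ δ * |s - t|) (hδ : 0 ≤ δ) (hR : W + δ * (W + ℓ) ≤ R)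
    {y : Fin (m + 1) → ℝ} (hy : y ∈ icoBox u ℓ) (j : Fin (m + 1)) :
    tubeCount g W j (WithLp.toLp 2 y) ≤ ∑ a ∈ activeTubes g W u ℓ j, ∏ i ∈ univ.erase j,
      (Set.Icc (graphPoint j (g j a) (u j) i - R) (graphPoint j (g j a) (u j) i + R)).indicator
        (1 : ℝ → ℝ≥0∞) (y i) := by
  have hyj : |y j - u j| ≤ ℓ := by
    obtain ⟨h₁, h₂⟩ := hy j trivial
    exact abs_le.mpr ⟨by linarith, by linarith⟩
  rw [tubeCount, ← sum_subset (subset_univ (activeTubes g W u ℓ j))]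
  · exact sum_le_sum fun a _ => tubeFn_le_prod_indicator (hg j a) (hR.trans' (by gcongr))
  · intro a _ ha
    rw [tubeFn_apply, if_neg fun h => ha (mem_activeTubes.mpr ⟨y, hy, h⟩)]

theorem setLIntegral_tubeProduct_le {δ R : ℝ} (hm : m ≠ 0)
    (hg : ∀ j a s t, ‖g j a s - g j a t‖ ≤ δ * |s - t|) (hδ : 0 ≤ δ) (hR : W + δ * (W + ℓ) ≤ R) :
    ∫⁻ y in icoBox u ℓ, tubeProduct g W (WithLp.toLp 2 y)
      ≤ ENNReal.ofReal (2 * R) ^ (m + 1) *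
          ∏ j, (#(activeTubes g W u ℓ j) : ℝ≥0∞) ^ ((1 : ℝ) / (((m + 1 : ℕ) : ℝ) - 1)) := by
  have hp₀ : (0 : ℝ) ≤ 1 / (((m + 1 : ℕ) : ℝ) - 1) := by push_cast; simp
  have hp : ((Fintype.card (Fin (m + 1)) : ℝ) - 1) * (1 / (((m + 1 : ℕ) : ℝ) - 1)) = 1 := by
    have : (m : ℝ) ≠ 0 := Nat.cast_ne_zero.mpr hm
    simp [this]
  set slab : (j : Fin (m + 1)) → Fin (N j) → Fin (m + 1) → Set ℝ := fun j a i =>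
    Set.Icc (graphPoint j (g j a) (u j) i - R) (graphPoint j (g j a) (u j) i + R)
  have hslab : ∀ j a i,
      volume.restrict (Set.Ico (u i) (u i + ℓ)) (slab j a i) ≤ ENNReal.ofReal (2 * R) :=
    fun j a i => (Measure.restrict_apply_le _ _).trans_eq (by rw [Real.volume_Icc]; ring_nf)
  calc ∫⁻ y in icoBox u ℓ, tubeProduct g W (WithLp.toLp 2 y)
      ≤ ∫⁻ y in icoBox u ℓ, ∏ j, (∑ a ∈ activeTubes g W u ℓ j, ∏ i ∈ univ.erase j,
          (slab j a i).indicator (1 : ℝ → ℝ≥0∞) (y i)) ^ ((1 : ℝ) / (((m + 1 : ℕ) : ℝ) - 1)) :=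
        setLIntegral_mono' (measurableSet_icoBox u ℓ) fun y hy => prod_le_prod' fun j _ =>
          ENNReal.rpow_le_rpow (tubeCount_le_sum_prod_indicator hg hδ hR hy j) hp₀
    _ ≤ ENNReal.ofReal (2 * R) ^ Fintype.card (Fin (m + 1)) *
          ∏ j, (#(activeTubes g W u ℓ j) : ℝ≥0∞) ^ ((1 : ℝ) / (((m + 1 : ℕ) : ℝ) - 1)) := by
        rw [icoBox, volume_pi, Measure.restrict_pi_pi]
        exact lintegral_prod_sum_prod_indicator_le _ _ slab (fun j a i => measurableSet_Icc)
          (fun j a _ i _ => hslab j a i) hp₀ hp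
    _ = _ := by rw [Fintype.card_fin]

theorem setLIntegral_tubeProduct_le_mul {δ : ℝ} (hm : m ≠ 0)
    (hg : ∀ j a s t, ‖g j a s - g j a t‖ ≤ δ * |s - t|) (hδ₀ : 0 < δ) (hδ : δ ≤ 1 / 2)
    (hℓ : 0 ≤ ℓ) (hℓ₁ : 2 * √((m : ℝ) + 1) * ℓ ≤ δ⁻¹ * W)
    (hℓ₂ : δ⁻¹ * W ≤ 4 * √((m : ℝ) + 1) * ℓ) :
    ∫⁻ y in icoBox u ℓ, tubeProduct g W (WithLp.toLp 2 y)
      ≤ ENNReal.ofReal ((16 * √((m : ℝ) + 1)) ^ (m + 1) * δ ^ (m + 1)) *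
          ∫⁻ y in icoBox u ℓ, tubeProduct g (δ⁻¹ * W) (WithLp.toLp 2 y) := by
  set s := √((m : ℝ) + 1)
  have hs : 1 ≤ s := Real.one_le_sqrt.mpr (by simp)
  have hδW : W = δ * (δ⁻¹ * W) := by field_simp
  have hW : 0 ≤ W := by rw [hδW]; nlinarith
  have hδℓ : 2 * δ * ℓ ≤ W := by rw [hδW]; nlinarith
  have h4W : 2 * (2 * W) ≤ 16 * s * δ * ℓ := by rw [hδW]; nlinarith
  have hsplit : ENNReal.ofReal (16 * s * δ * ℓ) ^ (m + 1)
      = ENNReal.ofReal ((16 * s) ^ (m + 1) * δ ^ (m + 1)) * ENNReal.ofReal ℓ ^ (m + 1) := by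
    rw [← ENNReal.ofReal_pow hℓ, ← ENNReal.ofReal_mul (by positivity),
      ← ENNReal.ofReal_pow (by positivity), mul_pow, mul_pow]
  calc _ ≤ ENNReal.ofReal (2 * (2 * W)) ^ (m + 1) *
          ∏ j, (#(activeTubes g W u ℓ j) : ℝ≥0∞) ^ ((1 : ℝ) / (((m + 1 : ℕ) : ℝ) - 1)) :=
        setLIntegral_tubeProduct_le hm hg hδ₀.le (by nlinarith)
    _ ≤ ENNReal.ofReal (16 * s * δ * ℓ) ^ (m + 1) *
          ∏ j, (#(activeTubes g W u ℓ j) : ℝ≥0∞) ^ ((1 : ℝ) / (((m + 1 : ℕ) : ℝ) - 1)) := by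
        gcongr ENNReal.ofReal ?_ ^ _ * _
    _ ≤ _ := by
        rw [hsplit, mul_assoc]
        gcongr
        exact le_setLIntegral_tubeProduct hℓ (by nlinarith)

end Box

/-- Scale-step lemma for Lipschitz curves: there is `C_n` such that for `0 < δ ≤ 1/2`,
`W > 0`, and graphs `γ_{j,a}` over the `x_j`-axis of `δ`-Lipschitz functions
`g_{j,a} : ℝ → ℝ^{n-1}`, for any cube of side `S ≥ δ⁻¹ W`,
`∫_{Q_S} ∏_j f_{j,W}^{1/(n-1)} ≤ C_n δⁿ ∫_{Q_S} ∏_j f_{j,δ⁻¹W}^{1/(n-1)}`. -/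
theorem scale_step_lipschitz (n : ℕ) (hn : 2 ≤ n) :
    ∃ C : ℝ, 0 < C ∧
      ∀ (δ W : ℝ), 0 < δ → δ ≤ 1 / 2 → 0 < W →
      ∀ (N : Fin n → ℕ) (g : (j : Fin n) → Fin (N j) → ℝ → EuclideanSpace ℝ (Fin (n - 1))),
        (∀ j a (s t : ℝ), ‖g j a s - g j a t‖ ≤ δ * |s - t|) →
        ∀ S : ℝ, δ⁻¹ * W ≤ S → ∀ c : EuclideanSpace ℝ (Fin n),
          ∫⁻ x in cube c S,
              ∏ j : Fin n, (∑ a : Fin (N j),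
                tubeFn (lipGraph j (g j a)) W x) ^ ((1 : ℝ) / ((n : ℝ) - 1))
            ≤ ENNReal.ofReal (C * δ ^ n) *
                ∫⁻ x in cube c S,
                  ∏ j : Fin n, (∑ a : Fin (N j),
                    tubeFn (lipGraph j (g j a)) (δ⁻¹ * W) x) ^ ((1 : ℝ) / ((n : ℝ) - 1)) := by
  obtain ⟨m, rfl⟩ : ∃ m, n = m + 1 := ⟨n - 1, by omega⟩
  set s := √((m : ℝ) + 1)
  have hs : 1 ≤ s := Real.one_le_sqrt.mpr (by simp)
  refine ⟨(16 * s) ^ (m + 1), by positivity, fun δ W hδ₀ hδ hW N g hg S hS c => ?_⟩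
  have hL : 0 < δ⁻¹ * W / (2 * s) := by positivity
  obtain ⟨K, hK, hℓ₁, hℓ₂⟩ :=
    exists_div_mem_Icc hL ((div_le_self (by positivity) (by linarith)).trans hS)
  have hℓ : 0 < S / K := (half_pos hL).trans_le hℓ₁
  have hSK : S = K * (S / K) := by field_simp
  simp only [cube, setLIntegral_setOf_forall_mem_eq]
  rw [hSK, setLIntegral_pi_Icc_eq_sum_icoBox _ _ hℓ, setLIntegral_pi_Icc_eq_sum_icoBox _ _ hℓ,
    mul_sum]
  refine sum_le_sum fun b _ => setLIntegral_tubeProduct_le_mul (by omega) hg hδ₀ hδ hℓ.le ?_ ?_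
  · rwa [le_div_iff₀ (by positivity), mul_comm] at hℓ₂
  · have := (div_le_iff₀ (by positivity)).mp ((div_le_iff₀ two_pos).mp hℓ₁)
    linarith
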